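/- Let $p$ be a prime, $n, t$ positive integers, and let $G \cong (\mathbb{Z}/p^n\mathbb{Z})^{t+1}$. Let $H \le G$ be a subgroup generated by at most $t$ elements. Then there exists a subgroup $\tilde{N} \le G$ containing $H$ such that $G/\tilde{N} \cong \mathbb{Z}/p^n\mathbb{Z}$. -/
import Mathlib

/-- If `G ≅ (ℤ/pⁿℤ)^(t+1)` and `H ≤ G` is generated by at most `t` elements, then there is a
subgroup `N` of `G` containing `H` with `G ⧸ N ≅ ℤ/pⁿℤ`. -/
theorem stmt_1 (p n t : ℕ) (hp : p.Prime) (hn : 1 ≤ n) (ht : 1 ≤ t)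
    (G : Type*) [AddCommGroup G] (e : G ≃+ (Fin (t + 1) → ZMod (p ^ n)))
    (H : AddSubgroup G) (S : Finset G) (hScard : S.card ≤ t)
    (hSgen : AddSubgroup.closure (S : Set G) = H) :
    ∃ N : AddSubgroup G, H ≤ N ∧ Nonempty ((G ⧸ N) ≃+ ZMod (p ^ n)) := by
  classical
  -- enumerate the generators by `Fin t`
  obtain ⟨g, hg⟩ : ∃ g : Fin t → G, ∀ s ∈ S, ∃ i, g i = s := by
    refine ⟨fun i => if h : (i : ℕ) < S.card then (S.equivFin.symm ⟨i, h⟩ : G) else 0, ?_⟩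
    intro s hs
    refine ⟨⟨S.equivFin ⟨s, hs⟩, lt_of_lt_of_le (S.equivFin ⟨s, hs⟩).2 hScard⟩, ?_⟩
    simp only [(S.equivFin ⟨s, hs⟩).2, dif_pos]
    rw [show (⟨(S.equivFin ⟨s, hs⟩ : ℕ), (S.equivFin ⟨s, hs⟩).2⟩ : Fin S.card) = S.equivFin ⟨s, hs⟩ from rfl, Equiv.symm_apply_apply]
  -- the square integer matrix of the generators, padded with a zero row
  set B : Matrix (Fin (t + 1)) (Fin (t + 1)) ℤ :=
    fun i j => if h : (i : ℕ) < t then ((e (g ⟨i, h⟩) j).val : ℤ) else 0 with hB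
  have hdet : B.det = 0 := by
    apply Matrix.det_eq_zero_of_row_eq_zero ⟨t, Nat.lt_succ_self t⟩
    intro j
    simp [hB]
  obtain ⟨v, hv0, hv⟩ : ∃ v : Fin (t + 1) → ℤ, v ≠ 0 ∧ B.mulVec v = 0 :=
    (Matrix.exists_mulVec_eq_zero_iff).2 hdet
  -- divide `v` by its gcd
  obtain ⟨i1, hi1⟩ : ∃ i, v i ≠ 0 := Function.ne_iff.1 hv0
  set d : ℤ := Finset.univ.gcd v with hd
  have hdne : d ≠ 0 := by
    intro h
    exact hi1 (Finset.gcd_eq_zero_iff.1 h i1 (Finset.mem_univ _))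
  set w : Fin (t + 1) → ℤ := fun j => v j / d with hw
  have hgcdw : Finset.univ.gcd w = 1 :=
    Finset.gcd_div_eq_one (Finset.mem_univ i1) hi1
  have hvd : ∀ j, v j = d * w j := fun j =>
    (Int.mul_ediv_cancel' (Finset.gcd_dvd (Finset.mem_univ j))).symm
  -- the rows of `B` pair to zero with `w`
  have hrow : ∀ i : Fin t, ∑ j, ((e (g i) j).val : ℤ) * w j = 0 := by
    intro i
    have h1 : B.mulVec v ⟨(i : ℕ), Nat.lt_succ_of_lt i.2⟩ = 0 := by rw [hv]; rfl
    have h2 : ∑ j, ((e (g i) j).val : ℤ) * v j = 0 := by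
      rw [Matrix.mulVec, dotProduct] at h1
      simpa [hB, i.2] using h1
    have h3 : d * ∑ j, ((e (g i) j).val : ℤ) * w j = 0 := by
      rw [Finset.mul_sum, ← h2]
      exact Finset.sum_congr rfl fun j _ => by rw [hvd j]; ring
    exact (mul_eq_zero.1 h3).resolve_left hdne
  -- some coordinate of `w` is coprime to `p`
  obtain ⟨i0, hi0⟩ : ∃ i, ¬ (p : ℤ) ∣ w i := by
    by_contra h
    push_neg at h
    have h1 : (p : ℤ) ∣ 1 := hgcdw ▸ Finset.dvd_gcd fun j _ => h j
    have h2 : p ∣ 1 := by exact_mod_cast h1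
    exact hp.one_lt.ne' (Nat.dvd_one.1 h2)
  have hcop : IsCoprime ((p : ℤ) ^ n) (w i0) :=
    IsCoprime.pow_left (((Nat.prime_iff_prime_int.mp hp).coprime_iff_not_dvd).2 hi0)
  obtain ⟨a, b, hab⟩ := hcop
  -- `w i0` is a unit in `ZMod (p ^ n)`
  have hunit : ((b : ZMod (p ^ n)) : ZMod (p ^ n)) * ((w i0 : ℤ) : ZMod (p ^ n)) = 1 := by
    have : ((a * p ^ n + b * w i0 : ℤ) : ZMod (p ^ n)) = 1 := by rw [hab]; norm_cast
    push_cast at this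
    rw [show ((p : ZMod (p ^ n)) ^ n) = 0 by
      have := ZMod.natCast_self (p ^ n); push_cast at this; exact this] at this
    simpa using this
  -- the homomorphism
  set φ : G →+ ZMod (p ^ n) :=
    { toFun := fun x => ∑ j, ((w j : ℤ) : ZMod (p ^ n)) * e x j
      map_zero' := by simp
      map_add' := by
        intro x y
        simp [map_add, mul_add, Finset.sum_add_distrib] } with hφ
  have hφ_apply : ∀ x, φ x = ∑ j, ((w j : ℤ) : ZMod (p ^ n)) * e x j := fun _ => rfl
  have hsurj : Function.Surjective φ := by
    intro c
    refine ⟨e.symm (Pi.single i0 ((b : ZMod (p ^ n)) * c)), ?_⟩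
    rw [hφ_apply, ]
    simp only [AddEquiv.apply_symm_apply]
    rw [Finset.sum_eq_single i0]
    · rw [Pi.single_eq_same, ← mul_assoc, mul_comm ((w i0 : ℤ) : ZMod (p ^ n)) _, hunit, one_mul]
    · intro j _ hj; rw [Pi.single_eq_of_ne hj, mul_zero]
    · intro h; exact absurd (Finset.mem_univ i0) h
  have hNZ : NeZero (p ^ n) := ⟨(pow_pos hp.pos n).ne'⟩
  have hker : ∀ s ∈ S, φ s = 0 := by
    intro s hs
    obtain ⟨i, rfl⟩ := hg s hs
    rw [hφ_apply]
    have : ((∑ j, ((e (g i) j).val : ℤ) * w j : ℤ) : ZMod (p ^ n)) = 0 := by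
      rw [hrow i]; norm_cast
    rw [← this]
    push_cast
    refine Finset.sum_congr rfl fun j _ => ?_
    rw [mul_comm]
    congr 1
    rw [ZMod.natCast_val, ZMod.cast_id]
  refine ⟨φ.ker, ?_, ⟨QuotientAddGroup.quotientKerEquivOfSurjective φ hsurj⟩⟩
  rw [← hSgen, AddSubgroup.closure_le]
  intro s hs
  exact hker s hs
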